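/- Let μ be a Borel measure on ℝ with μ(ℝ) = ∞, finite on bounded intervals, satisfying condition (H) (translation boundedness off a bounded interval), and let δ > 0. If h : ℝ → ℝ is bounded continuous and μ-ergodic (i.e., (1/μ([-r,r])) ∫_{[-r,r]} |h(t)| dμ(t) → 0), then the function t ↦ (∫_{−∞}^t e^{−2δ(t−s)} h²(s) ds)^{1/2} is also bounded continuous and μ-ergodic. -/

import Mathlib

open Filter Topology MeasureTheory Set

lemma st18_sqrt_add {x y : ℝ} (hx : 0 ≤ x) (hy : 0 ≤ y) :
    Real.sqrt (x + y) ≤ Real.sqrt x + Real.sqrt y := by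
  have h1 : x + y ≤ (Real.sqrt x + Real.sqrt y) ^ 2 := by
    have := Real.sq_sqrt hx
    have := Real.sq_sqrt hy
    nlinarith [Real.sqrt_nonneg x, Real.sqrt_nonneg y]
  calc Real.sqrt (x + y) ≤ Real.sqrt ((Real.sqrt x + Real.sqrt y) ^ 2) := Real.sqrt_le_sqrt h1
    _ = Real.sqrt x + Real.sqrt y := Real.sqrt_sq (by positivity)

lemma st18_intervalIntegral_exp_mul {c : ℝ} (hc : c ≠ 0) (a b : ℝ) :
    ∫ x in a..b, Real.exp (c * x) = (Real.exp (c * b) - Real.exp (c * a)) / c := by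
  rw [intervalIntegral.integral_comp_mul_left (fun x => Real.exp x) hc,
    integral_exp]
  rw [smul_eq_mul]
  ring

lemma st18_integrableOn_exp_mul {c : ℝ} (hc : 0 < c) (t : ℝ) :
    IntegrableOn (fun s => Real.exp (c * s)) (Set.Iic t) := by
  refine integrableOn_Iic_of_intervalIntegral_norm_bounded
      (Real.exp (c * t) / c) t (fun y => ?_) tendsto_id
      (Eventually.of_forall fun y => ?_)
  · exact ((Real.continuous_exp.comp (continuous_const.mul continuous_id)).integrableOn_Ioc)
  · simp only [Real.norm_eq_abs, abs_of_nonneg (Real.exp_pos _).le, id_eq]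
    rw [st18_intervalIntegral_exp_mul hc.ne']
    have : 0 < Real.exp (c * y) := Real.exp_pos _
    rw [div_le_div_iff_of_pos_right hc]
    linarith

lemma st18_integral_exp_mul_Iic {c : ℝ} (hc : 0 < c) (t : ℝ) :
    ∫ s in Set.Iic t, Real.exp (c * s) = Real.exp (c * t) / c := by
  refine tendsto_nhds_unique
    (intervalIntegral_tendsto_integral_Iic t (st18_integrableOn_exp_mul hc t) tendsto_id) ?_
  have h1 : Tendsto (fun y : ℝ => Real.exp (c * y)) atBot (𝓝 0) := by
    refine Real.tendsto_exp_atBot.comp ?_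
    exact Tendsto.const_mul_atBot hc tendsto_id
  have : Tendsto (fun y : ℝ => (Real.exp (c * t) - Real.exp (c * y)) / c) atBot
      (𝓝 ((Real.exp (c * t) - 0) / c)) := (tendsto_const_nhds.sub h1).div_const c
  rw [sub_zero] at this
  refine this.congr fun y => ?_
  rw [st18_intervalIntegral_exp_mul hc.ne']; rfl

lemma st18_inv_avg_le {a b D X : ℝ} (ha : 0 < a) (hb : 0 ≤ b) (hD : 0 < D)
    (hba : b ≤ D * a) (hX : 0 ≤ X) (hX0 : b = 0 → X = 0) :
    a⁻¹ * X ≤ D * (b⁻¹ * X) := by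
  rcases eq_or_lt_of_le hb with hb0 | hb0
  · rw [← hb0, hX0 hb0.symm]
    simp
  · rw [inv_mul_eq_div, inv_mul_eq_div, ← mul_div_assoc, div_le_div_iff₀ ha hb0]
    nlinarith

lemma st18_Mtop (μ : Measure ℝ) (hμinf : μ Set.univ = ⊤)
    (hμbd : ∀ a b : ℝ, μ (Set.Icc a b) < ⊤) :
    Tendsto (fun r : ℝ => (μ (Set.Icc (-r) r)).toReal) atTop atTop := by
  have hmono : Monotone (fun r : ℝ => Set.Icc (-r) r) := by
    intro r s hrs
    exact Set.Icc_subset_Icc (by linarith) hrs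
  have hun : (⋃ r : ℝ, Set.Icc (-r) r) = Set.univ := by
    refine Set.eq_univ_of_forall fun x => ?_
    exact Set.mem_iUnion.2 ⟨|x|, neg_abs_le x, le_abs_self x⟩
  have htend : Tendsto (fun r : ℝ => μ (Set.Icc (-r) r)) atTop (𝓝 ⊤) := by
    have := tendsto_measure_iUnion_atTop (μ := μ) hmono
    rwa [hun, hμinf] at this
  rw [tendsto_atTop]
  intro N
  have hev : ∀ᶠ r in atTop, ENNReal.ofReal N < μ (Set.Icc (-r) r) := by
    rcases eq_or_ne (ENNReal.ofReal N) ⊤ with hN | hN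
    · exact absurd hN ENNReal.ofReal_ne_top
    · exact htend.eventually (eventually_gt_nhds (lt_top_iff_ne_top.2 (by simp)))
  filter_upwards [hev] with r hr
  have h1 : ENNReal.ofReal N ≤ μ (Set.Icc (-r) r) := hr.le
  rcases le_or_gt N 0 with hN0 | hN0
  · exact hN0.trans ENNReal.toReal_nonneg
  · have h2 := ENNReal.toReal_mono (hμbd (-r) r).ne h1
    rwa [ENNReal.toReal_ofReal hN0.le] at h2

lemma st18_ratio (μ : Measure ℝ)
    (hH : ∀ τ : ℝ, ∃ β : ℝ, 0 < β ∧ ∃ a b : ℝ, ∀ A : Set ℝ, MeasurableSet A →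
      A ∩ Set.Icc a b = ∅ → μ ((fun x => x + τ) '' A) ≤ ENNReal.ofReal β * μ A)
    {c : ℝ} (hc : 0 ≤ c) :
    ∃ D : ℝ, 0 < D ∧ ∀ᶠ r in atTop,
      μ (Set.Icc (-(r + c)) (r + c)) ≤ ENNReal.ofReal D * μ (Set.Icc (-r) r) := by
  obtain ⟨β₁, hβ₁, a₁, b₁, hA₁⟩ := hH c
  obtain ⟨β₂, hβ₂, a₂, b₂, hA₂⟩ := hH (-c)
  refine ⟨1 + β₁ + β₂, by linarith, ?_⟩
  filter_upwards [eventually_ge_atTop (max (b₁ + c + 1) (max (c - a₂ + 1) c))] with r hr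
  have hr1 : b₁ < r - c := by have := le_trans (le_max_left _ _) hr; linarith
  have hr2 : -r + c < a₂ := by
    have := le_trans (le_trans (le_max_left _ _) (le_max_right _ _)) hr; linarith
  have hrc : c ≤ r := le_trans (le_trans (le_max_right _ _) (le_max_right _ _)) hr
  -- cover
  have hcover : Set.Icc (-(r + c)) (r + c) ⊆
      Set.Icc (-(r + c)) (-r) ∪ Set.Icc (-r) r ∪ Set.Icc r (r + c) := by
    intro x hx
    rcases le_or_gt x (-r) with h1 | h1
    · exact Or.inl (Or.inl ⟨hx.1, h1⟩)
    · rcases le_or_gt x r with h2 | h2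
      · exact Or.inl (Or.inr ⟨h1.le, h2⟩)
      · exact Or.inr ⟨h2.le, hx.2⟩
  have hright : μ (Set.Icc r (r + c)) ≤ ENNReal.ofReal β₁ * μ (Set.Icc (-r) r) := by
    have himg : (fun x => x + c) '' Set.Icc (r - c) r = Set.Icc r (r + c) := by
      rw [Set.image_add_const_Icc]; congr 1; ring
    have hdisj : Set.Icc (r - c) r ∩ Set.Icc a₁ b₁ = ∅ := by
      ext x; simp only [Set.mem_inter_iff, Set.mem_Icc, Set.mem_empty_iff_false, iff_false,
        not_and]
      intro h1 h2 h3; linarith [h1.1]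
    calc μ (Set.Icc r (r + c)) = μ ((fun x => x + c) '' Set.Icc (r - c) r) := by rw [himg]
      _ ≤ ENNReal.ofReal β₁ * μ (Set.Icc (r - c) r) := hA₁ _ measurableSet_Icc hdisj
      _ ≤ ENNReal.ofReal β₁ * μ (Set.Icc (-r) r) := by
          exact mul_le_mul_right (measure_mono (Set.Icc_subset_Icc (by linarith) le_rfl)) _
  have hleft : μ (Set.Icc (-(r + c)) (-r)) ≤ ENNReal.ofReal β₂ * μ (Set.Icc (-r) r) := by
    have himg : (fun x => x + -c) '' Set.Icc (-r) (-r + c) = Set.Icc (-(r + c)) (-r) := by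
      rw [Set.image_add_const_Icc]; congr 1 <;> ring
    have hdisj : Set.Icc (-r) (-r + c) ∩ Set.Icc a₂ b₂ = ∅ := by
      ext x; simp only [Set.mem_inter_iff, Set.mem_Icc, Set.mem_empty_iff_false, iff_false,
        not_and]
      intro h1 h2 h3; linarith
    calc μ (Set.Icc (-(r + c)) (-r)) = μ ((fun x => x + -c) '' Set.Icc (-r) (-r + c)) := by
          rw [himg]
      _ ≤ ENNReal.ofReal β₂ * μ (Set.Icc (-r) (-r + c)) := hA₂ _ measurableSet_Icc hdisj
      _ ≤ ENNReal.ofReal β₂ * μ (Set.Icc (-r) r) := by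
          exact mul_le_mul_right (measure_mono (Set.Icc_subset_Icc le_rfl (by linarith))) _
  calc μ (Set.Icc (-(r + c)) (r + c))
      ≤ μ (Set.Icc (-(r + c)) (-r) ∪ Set.Icc (-r) r ∪ Set.Icc r (r + c)) := measure_mono hcover
    _ ≤ μ (Set.Icc (-(r + c)) (-r)) + μ (Set.Icc (-r) r) + μ (Set.Icc r (r + c)) :=
        le_trans (measure_union_le _ _) (add_le_add_left (measure_union_le _ _) _)
    _ ≤ ENNReal.ofReal β₂ * μ (Set.Icc (-r) r) + μ (Set.Icc (-r) r)
        + ENNReal.ofReal β₁ * μ (Set.Icc (-r) r) :=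
        add_le_add (add_le_add hleft le_rfl) hright
    _ = (ENNReal.ofReal β₂ + 1 + ENNReal.ofReal β₁) * μ (Set.Icc (-r) r) := by ring
    _ ≤ ENNReal.ofReal (1 + β₁ + β₂) * μ (Set.Icc (-r) r) := by
        refine mul_le_mul_left ?_ _
        rw [ENNReal.ofReal_add (by linarith) hβ₂.le, ENNReal.ofReal_add (by norm_num) hβ₁.le]
        simp [ENNReal.ofReal_one]
        ring_nf
        exact le_rfl

lemma st18_keyD (μ : Measure ℝ)
    (hμbd : ∀ a b : ℝ, μ (Set.Icc a b) < ⊤)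
    (hH : ∀ τ : ℝ, ∃ β : ℝ, 0 < β ∧ ∃ a b : ℝ, ∀ A : Set ℝ, MeasurableSet A →
      A ∩ Set.Icc a b = ∅ → μ ((fun x => x + τ) '' A) ≤ ENNReal.ofReal β * μ A)
    (hMtop : Tendsto (fun r : ℝ => (μ (Set.Icc (-r) r)).toReal) atTop atTop)
    (h : ℝ → ℝ) (hc : Continuous h) {C : ℝ} (hC : ∀ t, |h t| ≤ C)
    (herg : Tendsto (fun r : ℝ => (μ (Set.Icc (-r) r)).toReal⁻¹ *
        ∫ t in Set.Icc (-r) r, |h t| ∂μ) atTop (𝓝 0)) (u : ℝ) :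
    Tendsto (fun r : ℝ => (μ (Set.Icc (-r) r)).toReal⁻¹ *
        ∫ t in Set.Icc (-r) r, |h (t - u)| ∂μ) atTop (𝓝 0) := by
  have hC0 : 0 ≤ C := le_trans (abs_nonneg _) (hC 0)
  obtain ⟨β, hβ, a, b, hA⟩ := hH u
  set c : ℝ := |u| with hcdef
  obtain ⟨D, hD, hDr⟩ := st18_ratio μ hH (abs_nonneg u)
  set g : ℝ → ℝ := fun x => x - u with hgdef
  have hgm : Measurable g := measurable_id.sub_const u
  set ν : Measure ℝ := μ.map g with hνdef
  have hν_apply : ∀ S : Set ℝ, MeasurableSet S → ν S = μ ((fun x => x + u) '' S) := by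
    intro S hS
    rw [hνdef, Measure.map_apply hgm hS]
    congr 1
    ext x
    simp only [Set.mem_preimage, Set.mem_image, hgdef]
    constructor
    · intro hx; exact ⟨x - u, hx, by ring⟩
    · rintro ⟨y, hy, rfl⟩; simpa using hy
  have hν_Icc : ∀ p q : ℝ, ν (Set.Icc p q) = μ (Set.Icc (p + u) (q + u)) := by
    intro p q
    rw [hνdef, Measure.map_apply hgm measurableSet_Icc]
    congr 1
    ext x
    simp only [Set.mem_preimage, Set.mem_Icc, hgdef]
    constructor <;> intro hx <;> constructor <;> linarith [hx.1, hx.2]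
  have hνI_lt : ν (Set.Icc a b) < ⊤ := by rw [hν_Icc]; exact hμbd _ _
  -- the main pointwise-in-r bound
  have main : ∀ r : ℝ, (∫ t in Set.Icc (-r) r, |h (t - u)| ∂μ) ≤
      β * (∫ t in Set.Icc (-(r + c)) (r + c), |h t| ∂μ) + C * (ν (Set.Icc a b)).toReal := by
    intro r
    set S : Set ℝ := Set.Icc (-r - u) (r - u) with hSdef
    have hSm : MeasurableSet S := measurableSet_Icc
    have hpre : g ⁻¹' S = Set.Icc (-r) r := by
      ext x
      simp only [Set.mem_preimage, Set.mem_Icc, hgdef, hSdef]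
      constructor <;> intro hx <;> constructor <;> linarith [hx.1, hx.2]
    have hνS : ν S < ⊤ := by
      rw [hνdef, Measure.map_apply hgm hSm, hpre]; exact hμbd _ _
    have habs : AEStronglyMeasurable (fun s => |h s|) ν := hc.abs.aestronglyMeasurable
    have eq1 : (∫ t in Set.Icc (-r) r, |h (t - u)| ∂μ) = ∫ s in S, |h s| ∂ν := by
      rw [hνdef, setIntegral_map hSm (hc.abs.aestronglyMeasurable) hgm.aemeasurable, hpre]
    rw [eq1]
    have hsplit : S = (S \ Set.Icc a b) ∪ (S ∩ Set.Icc a b) := (Set.diff_union_inter S _).symm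
    have hIm : MeasurableSet (Set.Icc a b : Set ℝ) := measurableSet_Icc
    have hint1 : IntegrableOn (fun s => |h s|) (S \ Set.Icc a b) ν := by
      refine Measure.integrableOn_of_bounded ?_ habs (M := C)
        (Eventually.of_forall fun x => by rw [Real.norm_eq_abs, abs_abs]; exact hC x)
      exact ((measure_mono Set.diff_subset).trans_lt hνS).ne
    have hint2 : IntegrableOn (fun s => |h s|) (S ∩ Set.Icc a b) ν := by
      refine Measure.integrableOn_of_bounded ?_ habs (M := C)
        (Eventually.of_forall fun x => by rw [Real.norm_eq_abs, abs_abs]; exact hC x)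
      exact ((measure_mono Set.inter_subset_left).trans_lt hνS).ne
    have hsum : (∫ s in S, |h s| ∂ν) =
        (∫ s in S \ Set.Icc a b, |h s| ∂ν) + ∫ s in S ∩ Set.Icc a b, |h s| ∂ν := by
      nth_rewrite 1 [hsplit]
      exact setIntegral_union (Set.disjoint_sdiff_left.mono_right Set.inter_subset_right) (hSm.inter hIm) hint1 hint2
    have hterm2 : (∫ s in S ∩ Set.Icc a b, |h s| ∂ν) ≤ C * (ν (Set.Icc a b)).toReal := by
      have hfin : ν (S ∩ Set.Icc a b) < ⊤ := (measure_mono Set.inter_subset_left).trans_lt hνS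
      have := norm_setIntegral_le_of_norm_le_const (μ := ν) (s := S ∩ Set.Icc a b) (C := C)
        hfin (fun x _ => by rw [Real.norm_eq_abs, abs_abs]; exact hC x)
      rw [Real.norm_eq_abs] at this
      refine le_trans (le_abs_self _) (le_trans this ?_)
      refine mul_le_mul_of_nonneg_left ?_ hC0
      exact ENNReal.toReal_mono hνI_lt.ne (measure_mono Set.inter_subset_right)
    have hterm1 : (∫ s in S \ Set.Icc a b, |h s| ∂ν) ≤
        β * ∫ s in S \ Set.Icc a b, |h s| ∂μ := by
      set B : Set ℝ := S \ Set.Icc a b with hBdef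
      have hBm : MeasurableSet B := hSm.diff hIm
      have hle : ν.restrict B ≤ (ENNReal.ofReal β) • μ.restrict B := by
        refine Measure.le_iff.2 fun A hAm => ?_
        rw [Measure.smul_apply, Measure.restrict_apply hAm, Measure.restrict_apply hAm,
          smul_eq_mul]
        have hABm : MeasurableSet (A ∩ B) := hAm.inter hBm
        have hABI : (A ∩ B) ∩ Set.Icc a b = ∅ := by
          ext x
          simp only [Set.mem_inter_iff, Set.mem_empty_iff_false, iff_false, not_and, hBdef,
            Set.mem_diff]
          tauto
        rw [hν_apply _ hABm]
        exact hA _ hABm hABI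
      have hμB : IntegrableOn (fun s => |h s|) B μ := by
        refine Measure.integrableOn_of_bounded ?_ hc.abs.aestronglyMeasurable (M := C)
          (Eventually.of_forall fun x => by rw [Real.norm_eq_abs, abs_abs]; exact hC x)
        refine ((measure_mono (hBdef ▸ Set.diff_subset)).trans_lt ?_).ne
        exact hμbd _ _
      have hint_smul : Integrable (fun s => |h s|) ((ENNReal.ofReal β) • μ.restrict B) :=
        hμB.smul_measure ENNReal.ofReal_ne_top
      have := integral_mono_measure hle
        (Eventually.of_forall fun x => abs_nonneg (h x)) hint_smul
      rw [integral_smul_measure, ENNReal.toReal_ofReal hβ.le, smul_eq_mul] at this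
      exact this
    have hterm1b : (∫ s in S \ Set.Icc a b, |h s| ∂μ) ≤
        ∫ t in Set.Icc (-(r + c)) (r + c), |h t| ∂μ := by
      have hsub : S \ Set.Icc a b ⊆ Set.Icc (-(r + c)) (r + c) := by
        intro x hx
        have hx1 := hx.1.1
        have hx2 := hx.1.2
        have h1 := le_abs_self u
        have h2 := neg_abs_le u
        constructor <;> simp only [hcdef] at * <;> linarith
      have hbig : IntegrableOn (fun s => |h s|) (Set.Icc (-(r + c)) (r + c)) μ := by
        refine Measure.integrableOn_of_bounded (hμbd _ _).ne
          hc.abs.aestronglyMeasurable (M := C)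
          (Eventually.of_forall fun x => by rw [Real.norm_eq_abs, abs_abs]; exact hC x)
      refine setIntegral_mono_set hbig (Eventually.of_forall fun x => abs_nonneg (h x))
        (HasSubset.Subset.eventuallyLE hsub)
    calc (∫ s in S, |h s| ∂ν)
        = (∫ s in S \ Set.Icc a b, |h s| ∂ν) + ∫ s in S ∩ Set.Icc a b, |h s| ∂ν := hsum
      _ ≤ β * (∫ t in Set.Icc (-(r + c)) (r + c), |h t| ∂μ) + C * (ν (Set.Icc a b)).toReal := by
          refine add_le_add (le_trans hterm1 ?_) hterm2
          exact mul_le_mul_of_nonneg_left hterm1b hβ.le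
  -- now the squeeze
  set M : ℝ → ℝ := fun r => (μ (Set.Icc (-r) r)).toReal with hMdef
  have hM0 : ∀ r, 0 ≤ M r := fun r => ENNReal.toReal_nonneg
  have hEc : Tendsto (fun r : ℝ => (M (r + c))⁻¹ *
      ∫ t in Set.Icc (-(r + c)) (r + c), |h t| ∂μ) atTop (𝓝 0) :=
    herg.comp (tendsto_atTop_add_const_right atTop c tendsto_id)
  have hMinv : Tendsto (fun r : ℝ => (M r)⁻¹) atTop (𝓝 0) := hMtop.inv_tendsto_atTop
  have hbound : Tendsto (fun r : ℝ => β * (D * ((M (r + c))⁻¹ *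
      ∫ t in Set.Icc (-(r + c)) (r + c), |h t| ∂μ)) +
      C * (ν (Set.Icc a b)).toReal * (M r)⁻¹) atTop (𝓝 0) := by
    have h1 := (hEc.const_mul D).const_mul β
    have h2 := hMinv.const_mul (C * (ν (Set.Icc a b)).toReal)
    simpa using h1.add h2
  refine tendsto_of_tendsto_of_tendsto_of_le_of_le' tendsto_const_nhds hbound ?_ ?_
  · refine Eventually.of_forall fun r => ?_
    refine mul_nonneg (inv_nonneg.2 (hM0 r)) ?_
    exact setIntegral_nonneg measurableSet_Icc fun x _ => abs_nonneg _
  · filter_upwards [hDr, hMtop.eventually_gt_atTop 0] with r hDrr hMr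
    have hXnn : 0 ≤ ∫ t in Set.Icc (-(r + c)) (r + c), |h t| ∂μ :=
      setIntegral_nonneg measurableSet_Icc fun x _ => abs_nonneg _
    have hMrc_le : M (r + c) ≤ D * M r := by
      have h1 : (ENNReal.ofReal D * μ (Set.Icc (-r) r)).toReal = D * M r := by
        rw [ENNReal.toReal_mul, ENNReal.toReal_ofReal hD.le]
      have h2 := ENNReal.toReal_mono (a := μ (Set.Icc (-(r + c)) (r + c)))
        (by exact ENNReal.mul_ne_top ENNReal.ofReal_ne_top (hμbd _ _).ne) hDrr
      rw [h1] at h2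
      exact h2
    have hX0 : M (r + c) = 0 → (∫ t in Set.Icc (-(r + c)) (r + c), |h t| ∂μ) = 0 := by
      intro hz
      have : (∫ t in Set.Icc (-(r + c)) (r + c), |h t| ∂μ) ≤ C * M (r + c) := by
        refine le_trans (le_abs_self _) ?_
        exact norm_setIntegral_le_of_norm_le_const (f := fun t => |h t|) (C := C) (hμbd _ _)
          (fun x _ => by rw [Real.norm_eq_abs, abs_abs]; exact hC x)
      rw [hz, mul_zero] at this
      linarith
    have step1 : (M r)⁻¹ * (∫ t in Set.Icc (-r) r, |h (t - u)| ∂μ) ≤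
        (M r)⁻¹ * (β * (∫ t in Set.Icc (-(r + c)) (r + c), |h t| ∂μ)
          + C * (ν (Set.Icc a b)).toReal) :=
      mul_le_mul_of_nonneg_left (main r) (inv_nonneg.2 (hM0 r))
    refine le_trans step1 ?_
    rw [mul_add]
    refine add_le_add ?_ (le_of_eq (mul_comm _ _))
    have := st18_inv_avg_le (a := M r) (b := M (r + c)) (D := D)
      (X := ∫ t in Set.Icc (-(r + c)) (r + c), |h t| ∂μ) hMr (hM0 _) hD hMrc_le hXnn hX0
    calc (M r)⁻¹ * (β * ∫ t in Set.Icc (-(r + c)) (r + c), |h t| ∂μ)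
        = β * ((M r)⁻¹ * ∫ t in Set.Icc (-(r + c)) (r + c), |h t| ∂μ) := by ring
      _ ≤ β * (D * ((M (r + c))⁻¹ * ∫ t in Set.Icc (-(r + c)) (r + c), |h t| ∂μ)) :=
          mul_le_mul_of_nonneg_left this hβ.le

set_option maxHeartbeats 1000000 in
/-- If `h` is bounded continuous and `μ`-ergodic (with `μ` infinite, finite on
bounded intervals and satisfying condition (H)), then
`t ↦ (∫_{−∞}^t e^{−2δ(t−s)} h²(s) ds)^{1/2}` is also bounded continuous and
`μ`-ergodic. -/
theorem stmt_18 (μ : Measure ℝ) (hμinf : μ Set.univ = ⊤)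
    (hμbd : ∀ a b : ℝ, μ (Set.Icc a b) < ⊤)
    (hH : ∀ τ : ℝ, ∃ β : ℝ, 0 < β ∧ ∃ a b : ℝ, ∀ A : Set ℝ, MeasurableSet A →
      A ∩ Set.Icc a b = ∅ → μ ((fun x => x + τ) '' A) ≤ ENNReal.ofReal β * μ A)
    (δ : ℝ) (hδ : 0 < δ)
    (h : ℝ → ℝ) (hc : Continuous h) (hb : ∃ C : ℝ, ∀ t, |h t| ≤ C)
    (herg : Tendsto (fun r : ℝ => (μ (Set.Icc (-r) r)).toReal⁻¹ *
        ∫ t in Set.Icc (-r) r, |h t| ∂μ) atTop (𝓝 0)) :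
    Continuous (fun t : ℝ =>
      Real.sqrt (∫ s in Set.Iic t, Real.exp (-2 * δ * (t - s)) * h s ^ 2)) ∧
    (∃ C : ℝ, ∀ t : ℝ,
      Real.sqrt (∫ s in Set.Iic t, Real.exp (-2 * δ * (t - s)) * h s ^ 2) ≤ C) ∧
    Tendsto (fun r : ℝ => (μ (Set.Icc (-r) r)).toReal⁻¹ *
        ∫ t in Set.Icc (-r) r,
          Real.sqrt (∫ s in Set.Iic t, Real.exp (-2 * δ * (t - s)) * h s ^ 2) ∂μ)
      atTop (𝓝 0) := by
  obtain ⟨C, hC⟩ := hb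
  have hC0 : 0 ≤ C := le_trans (abs_nonneg _) (hC 0)
  set κ : ℝ := 2 * δ with hκdef
  have hκ : 0 < κ := by positivity
  set K : ℝ := C ^ 2 with hKdef
  have hK0 : 0 ≤ K := sq_nonneg C
  have hhK : ∀ s, h s ^ 2 ≤ K := by
    intro s
    rw [hKdef, ← sq_abs]
    exact pow_le_pow_left₀ (abs_nonneg _) (hC s) 2
  -- integrability of the weight function
  have hψint : ∀ t : ℝ, IntegrableOn (fun s => Real.exp (κ * s) * h s ^ 2) (Set.Iic t) := by
    intro t
    refine Integrable.mono' ((st18_integrableOn_exp_mul hκ t).const_mul K)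
      ((Real.continuous_exp.comp (continuous_const.mul continuous_id)).mul
        (hc.pow 2)).aestronglyMeasurable.restrict
      (Eventually.of_forall fun s => ?_)
    rw [Real.norm_eq_abs, abs_of_nonneg (by positivity)]
    calc Real.exp (κ * s) * h s ^ 2 ≤ Real.exp (κ * s) * K :=
          mul_le_mul_of_nonneg_left (hhK s) (Real.exp_pos _).le
      _ = K * Real.exp (κ * s) := mul_comm _ _
  have hexp_split : ∀ t s : ℝ, Real.exp (-2 * δ * (t - s)) =
      Real.exp (-κ * t) * Real.exp (κ * s) := by
    intro t s
    rw [← Real.exp_add]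
    congr 1
    rw [hκdef]; ring
  have hφint : ∀ t t' : ℝ,
      IntegrableOn (fun s => Real.exp (-2 * δ * (t - s)) * h s ^ 2) (Set.Iic t') := by
    intro t t'
    have h1 : IntegrableOn (fun s => Real.exp (-κ * t) * (Real.exp (κ * s) * h s ^ 2))
        (Set.Iic t') volume := (hψint t').const_mul _
    refine h1.congr_fun (fun s _ => ?_) measurableSet_Iic
    beta_reduce
    rw [← mul_assoc, ← hexp_split]
  have hg_eq : ∀ t : ℝ, (∫ s in Set.Iic t, Real.exp (-2 * δ * (t - s)) * h s ^ 2) =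
      Real.exp (-κ * t) * ∫ s in Set.Iic t, Real.exp (κ * s) * h s ^ 2 := by
    intro t
    rw [← integral_const_mul]
    refine setIntegral_congr_fun measurableSet_Iic fun s _ => ?_
    rw [← mul_assoc, ← hexp_split]
  -- upper bound on tails
  have hIic_le : ∀ t t' : ℝ, t' ≤ t →
      (∫ s in Set.Iic t', Real.exp (-2 * δ * (t - s)) * h s ^ 2) ≤
        K * Real.exp (-κ * (t - t')) / κ := by
    intro t t' htt
    have h1 : (∫ s in Set.Iic t', Real.exp (-2 * δ * (t - s)) * h s ^ 2) =
        Real.exp (-κ * t) * ∫ s in Set.Iic t', Real.exp (κ * s) * h s ^ 2 := by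
      rw [← integral_const_mul]
      refine setIntegral_congr_fun measurableSet_Iic fun s _ => ?_
      rw [← mul_assoc, ← hexp_split]
    have h2 : (∫ s in Set.Iic t', Real.exp (κ * s) * h s ^ 2) ≤
        K * (Real.exp (κ * t') / κ) := by
      rw [← st18_integral_exp_mul_Iic hκ t', ← integral_const_mul]
      refine setIntegral_mono_on (hψint t') ((st18_integrableOn_exp_mul hκ t').const_mul K)
        measurableSet_Iic fun s _ => ?_
      calc Real.exp (κ * s) * h s ^ 2 ≤ Real.exp (κ * s) * K :=
            mul_le_mul_of_nonneg_left (hhK s) (Real.exp_pos _).le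
        _ = K * Real.exp (κ * s) := mul_comm _ _
    calc (∫ s in Set.Iic t', Real.exp (-2 * δ * (t - s)) * h s ^ 2)
        = Real.exp (-κ * t) * ∫ s in Set.Iic t', Real.exp (κ * s) * h s ^ 2 := h1
      _ ≤ Real.exp (-κ * t) * (K * (Real.exp (κ * t') / κ)) := by
          refine mul_le_mul_of_nonneg_left h2 (Real.exp_pos _).le
      _ = K * (Real.exp (-κ * t) * Real.exp (κ * t')) / κ := by ring
      _ = K * Real.exp (-κ * (t - t')) / κ := by rw [← Real.exp_add]; ring_nf
  have hg_nonneg : ∀ t : ℝ, 0 ≤ ∫ s in Set.Iic t, Real.exp (-2 * δ * (t - s)) * h s ^ 2 :=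
    fun t => setIntegral_nonneg measurableSet_Iic fun s _ => by positivity
  have hg_bd : ∀ t : ℝ, (∫ s in Set.Iic t, Real.exp (-2 * δ * (t - s)) * h s ^ 2) ≤ K / κ := by
    intro t
    have := hIic_le t t le_rfl
    simpa using this
  set F : ℝ → ℝ := fun t =>
    Real.sqrt (∫ s in Set.Iic t, Real.exp (-2 * δ * (t - s)) * h s ^ 2) with hFdef
  have hF_nonneg : ∀ t, 0 ≤ F t := fun t => Real.sqrt_nonneg _
  have hF_bd : ∀ t, F t ≤ Real.sqrt (K / κ) := fun t => Real.sqrt_le_sqrt (hg_bd t)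
  -- continuity
  have hPcont : Continuous fun t : ℝ => ∫ x in (0:ℝ)..t, Real.exp (κ * x) * h x ^ 2 :=
    intervalIntegral.continuous_primitive
      (fun a b => ((Real.continuous_exp.comp (continuous_const.mul continuous_id)).mul
        (hc.pow 2)).intervalIntegrable a b) 0
  have hGt : ∀ t : ℝ, (∫ s in Set.Iic t, Real.exp (κ * s) * h s ^ 2) =
      (∫ s in Set.Iic (0:ℝ), Real.exp (κ * s) * h s ^ 2)
        + ∫ x in (0:ℝ)..t, Real.exp (κ * x) * h x ^ 2 := by
    intro t
    have := intervalIntegral.integral_Iic_sub_Iic (hψint 0) (hψint t)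
    linarith
  have hFcont : Continuous F := by
    have heq : F = fun t => Real.sqrt (Real.exp (-κ * t) *
        ((∫ s in Set.Iic (0:ℝ), Real.exp (κ * s) * h s ^ 2)
          + ∫ x in (0:ℝ)..t, Real.exp (κ * x) * h x ^ 2)) := by
      funext t
      rw [hFdef]
      simp only
      rw [hg_eq, hGt]
    rw [heq]
    exact Real.continuous_sqrt.comp ((Real.continuous_exp.comp
      (continuous_const.mul continuous_id)).mul (continuous_const.add hPcont))
  refine ⟨hFcont, ⟨Real.sqrt (K / κ), hF_bd⟩, ?_⟩
  -- the ergodic part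
  have hMtop := st18_Mtop μ hμinf hμbd
  set M : ℝ → ℝ := fun r => (μ (Set.Icc (-r) r)).toReal with hMdef
  have hM0 : ∀ r, 0 ≤ M r := fun r => ENNReal.toReal_nonneg
  have hF_int : ∀ r : ℝ, IntegrableOn F (Set.Icc (-r) r) μ := by
    intro r
    refine Measure.integrableOn_of_bounded (hμbd _ _).ne hFcont.aestronglyMeasurable
      (M := Real.sqrt (K / κ)) (Eventually.of_forall fun t => ?_)
    rw [Real.norm_eq_abs, abs_of_nonneg (hF_nonneg t)]
    exact hF_bd t
  refine Metric.tendsto_nhds.2 fun ε hε => ?_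
  set q : ℝ := ε / 4 with hqdef
  have hq : 0 < q := by positivity
  -- choose T
  have hexp0 : Tendsto (fun T : ℝ => Real.exp (-κ * T)) atTop (𝓝 0) := by
    have h1 : Tendsto (fun T : ℝ => κ * T) atTop atTop :=
      Tendsto.const_mul_atTop hκ tendsto_id
    have h2 := (Real.tendsto_exp_atTop.comp h1).inv_tendsto_atTop
    refine h2.congr fun T => ?_
    simp only [Function.comp_apply, Pi.inv_apply]
    rw [← Real.exp_neg]
    ring_nf
  have htd : Tendsto (fun T : ℝ => K * Real.exp (-κ * T) / κ) atTop (𝓝 0) := by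
    have := (hexp0.const_mul K).div_const κ
    simpa using this
  obtain ⟨T₁, hT₁⟩ := eventually_atTop.1 (htd.eventually (gt_mem_nhds (by positivity : (0:ℝ) < q ^ 2)))
  set T : ℝ := max T₁ 0 with hTdef
  have hT0 : 0 ≤ T := le_max_right _ _
  set aT : ℝ := K * Real.exp (-κ * T) / κ with haTdef
  have haT : aT < q ^ 2 := hT₁ T (le_max_left _ _)
  have haT0 : 0 ≤ aT := by positivity
  have hsqrta : Real.sqrt aT ≤ q :=
    le_trans (Real.sqrt_le_sqrt haT.le) (le_of_eq (Real.sqrt_sq hq.le))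
  set b : ℝ → ℝ := fun t => C * ∫ x in (t - T)..t, |h x| with hbdef
  have hb_nonneg : ∀ t, 0 ≤ b t := fun t =>
    mul_nonneg hC0 (intervalIntegral.integral_nonneg (by linarith) fun x _ => abs_nonneg _)
  have hb_bd : ∀ t, b t ≤ C * (C * T) := by
    intro t
    refine mul_le_mul_of_nonneg_left ?_ hC0
    have h1 := intervalIntegral.norm_integral_le_of_norm_le_const
      (C := C) (f := fun x => |h x|) (a := t - T) (b := t)
      (fun x _ => by rw [Real.norm_eq_abs, abs_abs]; exact hC x)
    rw [Real.norm_eq_abs] at h1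
    have h2 : |t - (t - T)| = T := by rw [abs_of_nonneg (by linarith)]; ring
    rw [h2] at h1
    exact le_trans (le_abs_self _) h1
  have hb_cont : Continuous b := by
    have hP2 : Continuous fun y : ℝ => ∫ x in (0:ℝ)..y, |h x| :=
      intervalIntegral.continuous_primitive (fun a b => (hc.abs.intervalIntegrable a b)) 0
    have heq : b = fun t => C * ((∫ x in (0:ℝ)..t, |h x|) - ∫ x in (0:ℝ)..(t - T), |h x|) := by
      funext t
      rw [hbdef]
      simp only
      congr 1
      have := intervalIntegral.integral_add_adjacent_intervals (μ := volume) (a := (0:ℝ)) (b := t - T)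
        (c := t) (hc.abs.intervalIntegrable _ _) (hc.abs.intervalIntegrable _ _)
      linarith
    rw [heq]
    exact continuous_const.mul (hP2.sub (hP2.comp (continuous_id.sub continuous_const)))
  have hb_int : ∀ r : ℝ, IntegrableOn b (Set.Icc (-r) r) μ := by
    intro r
    refine Measure.integrableOn_of_bounded (hμbd _ _).ne hb_cont.aestronglyMeasurable
      (M := C * (C * T)) (Eventually.of_forall fun t => ?_)
    rw [Real.norm_eq_abs, abs_of_nonneg (hb_nonneg t)]
    exact hb_bd t
  -- pointwise bound
  have key : ∀ t : ℝ, F t ≤ (Real.sqrt aT + q) + q⁻¹ * b t := by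
    intro t
    have hgsplit : (∫ s in Set.Iic t, Real.exp (-2 * δ * (t - s)) * h s ^ 2) =
        (∫ s in Set.Iic (t - T), Real.exp (-2 * δ * (t - s)) * h s ^ 2)
          + ∫ s in (t - T)..t, Real.exp (-2 * δ * (t - s)) * h s ^ 2 := by
      have := intervalIntegral.integral_Iic_sub_Iic (hφint t (t - T)) (hφint t t)
      linarith
    have hA : (∫ s in Set.Iic (t - T), Real.exp (-2 * δ * (t - s)) * h s ^ 2) ≤ aT := by
      have := hIic_le t (t - T) (by linarith)
      have heq : t - (t - T) = T := by ring
      rw [heq] at this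
      exact this
    have hB : (∫ s in (t - T)..t, Real.exp (-2 * δ * (t - s)) * h s ^ 2) ≤ b t := by
      have hmono : ∀ s ∈ Set.Icc (t - T) t,
          Real.exp (-2 * δ * (t - s)) * h s ^ 2 ≤ C * |h s| := by
        intro s hs
        have h1 : Real.exp (-2 * δ * (t - s)) ≤ 1 := by
          rw [Real.exp_le_one_iff]
          nlinarith [hs.2]
        have h2 : h s ^ 2 ≤ C * |h s| := by
          nlinarith [sq_abs (h s), hC s, abs_nonneg (h s)]
        calc Real.exp (-2 * δ * (t - s)) * h s ^ 2 ≤ 1 * (C * |h s|) := by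
              refine mul_le_mul h1 h2 (by positivity) (by norm_num)
          _ = C * |h s| := one_mul _
      have hint1 : IntervalIntegrable (fun s => Real.exp (-2 * δ * (t - s)) * h s ^ 2)
          volume (t - T) t :=
        (((Real.continuous_exp.comp (continuous_const.mul (continuous_const.sub continuous_id))).mul (hc.pow 2)).intervalIntegrable _ _)
      have hint2 : IntervalIntegrable (fun s => C * |h s|) volume (t - T) t :=
        ((continuous_const.mul hc.abs).intervalIntegrable _ _)
      calc (∫ s in (t - T)..t, Real.exp (-2 * δ * (t - s)) * h s ^ 2)
          ≤ ∫ s in (t - T)..t, C * |h s| :=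
            intervalIntegral.integral_mono_on (by linarith) hint1 hint2 hmono
        _ = b t := by rw [hbdef]; simp only; rw [intervalIntegral.integral_const_mul]
    have hg_ab : (∫ s in Set.Iic t, Real.exp (-2 * δ * (t - s)) * h s ^ 2) ≤ aT + b t := by
      rw [hgsplit]; exact add_le_add hA hB
    have hs1 : F t ≤ Real.sqrt (aT + b t) := Real.sqrt_le_sqrt hg_ab
    have hs2 : Real.sqrt (aT + b t) ≤ Real.sqrt aT + Real.sqrt (b t) :=
      st18_sqrt_add haT0 (hb_nonneg t)
    have hs3 : Real.sqrt (b t) ≤ q + q⁻¹ * b t := by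
      rcases le_or_gt (b t) (q ^ 2) with hbt | hbt
      · have : Real.sqrt (b t) ≤ q :=
          le_trans (Real.sqrt_le_sqrt hbt) (le_of_eq (Real.sqrt_sq hq.le))
        have h4 : 0 ≤ q⁻¹ * b t := mul_nonneg (inv_nonneg.2 hq.le) (hb_nonneg t)
        linarith
      · have h1 : q ≤ Real.sqrt (b t) := by
          rw [show q = Real.sqrt (q ^ 2) from (Real.sqrt_sq hq.le).symm]
          exact Real.sqrt_le_sqrt hbt.le
        have h2 : Real.sqrt (b t) * Real.sqrt (b t) = b t :=
          Real.mul_self_sqrt (hb_nonneg t)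
        have h3 : Real.sqrt (b t) * q ≤ b t := by nlinarith [Real.sqrt_nonneg (b t)]
        have h4 : Real.sqrt (b t) ≤ q⁻¹ * b t := by
          rw [inv_mul_eq_div, le_div_iff₀ hq]
          exact h3
        linarith
    calc F t ≤ Real.sqrt (aT + b t) := hs1
      _ ≤ Real.sqrt aT + Real.sqrt (b t) := hs2
      _ ≤ Real.sqrt aT + (q + q⁻¹ * b t) := by linarith
      _ = (Real.sqrt aT + q) + q⁻¹ * b t := by ring
  -- the double-integral swap
  have hswap : ∀ r : ℝ, (∫ t in Set.Icc (-r) r, b t ∂μ) =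
      C * ∫ u in Set.Ioc (0:ℝ) T, (∫ t in Set.Icc (-r) r, |h (t - u)| ∂μ) := by
    intro r
    have hb_eq : ∀ t : ℝ, b t = C * ∫ u in Set.Ioc (0:ℝ) T, |h (t - u)| := by
      intro t
      rw [hbdef]
      simp only
      congr 1
      have h1 : (∫ u in (0:ℝ)..T, |h (t - u)|) = ∫ x in (t - T)..(t - 0), |h x| :=
        intervalIntegral.integral_comp_sub_left (fun x => |h x|) t
      rw [sub_zero] at h1
      rw [← h1, intervalIntegral.integral_of_le hT0]
    haveI hfin1 : IsFiniteMeasure (μ.restrict (Set.Icc (-r) r)) :=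
      ⟨by rw [Measure.restrict_apply_univ]; exact hμbd _ _⟩
    haveI hfin2 : IsFiniteMeasure (volume.restrict (Set.Ioc (0:ℝ) T)) :=
      ⟨by rw [Measure.restrict_apply_univ, Real.volume_Ioc]; exact ENNReal.ofReal_lt_top⟩
    have hprod : Integrable (Function.uncurry fun t u => |h (t - u)|)
        ((μ.restrict (Set.Icc (-r) r)).prod (volume.restrict (Set.Ioc (0:ℝ) T))) := by
      refine Integrable.mono' (integrable_const C)
        ((hc.comp (continuous_fst.sub continuous_snd)).abs).aestronglyMeasurable
        (Eventually.of_forall fun p => ?_)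
      simp only [Function.uncurry, Real.norm_eq_abs, abs_abs]
      exact hC _
    calc (∫ t in Set.Icc (-r) r, b t ∂μ)
        = ∫ t in Set.Icc (-r) r, (C * ∫ u in Set.Ioc (0:ℝ) T, |h (t - u)|) ∂μ := by
          refine setIntegral_congr_fun measurableSet_Icc fun t _ => hb_eq t
      _ = C * ∫ t in Set.Icc (-r) r, (∫ u in Set.Ioc (0:ℝ) T, |h (t - u)|) ∂μ := by
          rw [integral_const_mul]
      _ = C * ∫ u in Set.Ioc (0:ℝ) T, (∫ t in Set.Icc (-r) r, |h (t - u)| ∂μ) := by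
          congr 1
          exact integral_integral_swap hprod
  set Ψ : ℝ → ℝ := fun r => ∫ u in Set.Ioc (0:ℝ) T,
      ((M r)⁻¹ * ∫ t in Set.Icc (-r) r, |h (t - u)| ∂μ) with hΨdef
  have hXb_eq : ∀ r : ℝ, (M r)⁻¹ * (∫ t in Set.Icc (-r) r, b t ∂μ) = C * Ψ r := by
    intro r
    rw [hswap r, hΨdef]
    simp only
    rw [integral_const_mul]
    ring
  have hΨ0 : Tendsto Ψ atTop (𝓝 0) := by
    have h0 : Tendsto Ψ atTop (𝓝 (∫ u in Set.Ioc (0:ℝ) T, (0:ℝ))) := by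
      refine tendsto_integral_filter_of_dominated_convergence (bound := fun _ => C) ?_ ?_ ?_ ?_
      · refine Eventually.of_forall fun r => ?_
        have hcont : Continuous fun u => ∫ t in Set.Icc (-r) r, |h (t - u)| ∂μ := by
          refine continuous_of_dominated (bound := fun _ => C)
            (fun u => ((hc.comp (continuous_id.sub continuous_const)).abs).aestronglyMeasurable)
            (fun u => Eventually.of_forall fun t => by
              rw [Real.norm_eq_abs, abs_abs]; exact hC _) ?_
            (Eventually.of_forall fun t => by
              exact (hc.comp (continuous_const.sub continuous_id)).abs)
          exact integrableOn_const (hμbd _ _).ne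
        exact (continuous_const.mul hcont).aestronglyMeasurable
      · filter_upwards [hMtop.eventually_gt_atTop 0] with r hMr
        refine Eventually.of_forall fun u => ?_
        have hX0 : 0 ≤ ∫ t in Set.Icc (-r) r, |h (t - u)| ∂μ :=
          setIntegral_nonneg measurableSet_Icc fun t _ => abs_nonneg _
        have hXle : (∫ t in Set.Icc (-r) r, |h (t - u)| ∂μ) ≤ C * M r := by
          have := norm_setIntegral_le_of_norm_le_const (μ := μ) (s := Set.Icc (-r) r)
            (f := fun t => |h (t - u)|)
            (C := C) (hμbd _ _) (fun x _ => by rw [Real.norm_eq_abs, abs_abs]; exact hC _)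
          rw [Real.norm_eq_abs] at this
          exact le_trans (le_abs_self _) this
        rw [Real.norm_eq_abs, abs_of_nonneg (mul_nonneg (inv_nonneg.2 (hM0 r)) hX0)]
        calc (M r)⁻¹ * ∫ t in Set.Icc (-r) r, |h (t - u)| ∂μ
            ≤ (M r)⁻¹ * (C * M r) := mul_le_mul_of_nonneg_left hXle (inv_nonneg.2 (hM0 r))
          _ = C := by field_simp
      · exact integrableOn_const (by rw [Real.volume_Ioc]; exact ENNReal.ofReal_ne_top)
      · exact Eventually.of_forall fun u => st18_keyD μ hμbd hH hMtop h hc hC herg u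
    simpa using h0
  have hXb0 : Tendsto (fun r => (M r)⁻¹ * (∫ t in Set.Icc (-r) r, b t ∂μ)) atTop (𝓝 0) := by
    have := hΨ0.const_mul C
    rw [mul_zero] at this
    refine this.congr fun r => (hXb_eq r).symm
  have hsmall : ∀ᶠ r in atTop,
      q⁻¹ * ((M r)⁻¹ * (∫ t in Set.Icc (-r) r, b t ∂μ)) < q := by
    have := hXb0.const_mul q⁻¹
    rw [mul_zero] at this
    exact this.eventually (gt_mem_nhds hq)
  filter_upwards [hMtop.eventually_gt_atTop 0, hsmall] with r hMr hsm
  have hAnn : 0 ≤ (M r)⁻¹ * ∫ t in Set.Icc (-r) r, F t ∂μ := by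
    refine mul_nonneg (inv_nonneg.2 (hM0 r)) ?_
    exact setIntegral_nonneg measurableSet_Icc fun t _ => hF_nonneg t
  have hint_rhs : IntegrableOn (fun t => (Real.sqrt aT + q) + q⁻¹ * b t)
      (Set.Icc (-r) r) μ := by
    refine Integrable.add (integrableOn_const (hμbd _ _).ne) ?_
    exact (hb_int r).const_mul _
  have hle1 : (∫ t in Set.Icc (-r) r, F t ∂μ) ≤
      ∫ t in Set.Icc (-r) r, ((Real.sqrt aT + q) + q⁻¹ * b t) ∂μ :=
    setIntegral_mono_on (hF_int r) hint_rhs measurableSet_Icc fun t _ => key t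
  have hle2 : (∫ t in Set.Icc (-r) r, ((Real.sqrt aT + q) + q⁻¹ * b t) ∂μ) =
      (Real.sqrt aT + q) * M r + q⁻¹ * ∫ t in Set.Icc (-r) r, b t ∂μ := by
    rw [integral_add (integrableOn_const (C := Real.sqrt aT + q) (hμbd _ _).ne) ((hb_int r).const_mul _),
      setIntegral_const, integral_const_mul, smul_eq_mul, mul_comm]
    rfl
  have hchain : (M r)⁻¹ * (∫ t in Set.Icc (-r) r, F t ∂μ) ≤
      (Real.sqrt aT + q) + q⁻¹ * ((M r)⁻¹ * ∫ t in Set.Icc (-r) r, b t ∂μ) := by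
    calc (M r)⁻¹ * (∫ t in Set.Icc (-r) r, F t ∂μ)
        ≤ (M r)⁻¹ * ((Real.sqrt aT + q) * M r + q⁻¹ * ∫ t in Set.Icc (-r) r, b t ∂μ) := by
          rw [← hle2]
          exact mul_le_mul_of_nonneg_left hle1 (inv_nonneg.2 (hM0 r))
      _ = (Real.sqrt aT + q) + q⁻¹ * ((M r)⁻¹ * ∫ t in Set.Icc (-r) r, b t ∂μ) := by
          field_simp
  rw [Real.dist_eq, sub_zero, abs_of_nonneg hAnn]
  calc (M r)⁻¹ * ∫ t in Set.Icc (-r) r, F t ∂μ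
      ≤ (Real.sqrt aT + q) + q⁻¹ * ((M r)⁻¹ * ∫ t in Set.Icc (-r) r, b t ∂μ) := hchain
    _ < q + q + q := by
        have := hsqrta
        linarith
    _ < ε := by rw [hqdef]; linarith
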